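/- Let $0 < |q| < 1$ and $0 < |s| < 1$. For $m \in \mathbb{Z}_{> 0}$, the Laurent polynomial $G_{-m}(x) := \dfrac{q^m s x\,(qsx;q)_{m-1}(sx^{-1};q)_{m+1}}{(q^m s^2;q)_{m+1}(q^{1-m};q)_{m-1}}$ has degree $\le m$ and satisfies $G_{-m}(q^k s^{\mathrm{sgn}(k)}) = \delta_{-m,k}$ for all $k \in \mathbb{Z}$ with $|k| \le m$, where $\mathrm{sgn}(k) = 1$ if $k \ge 0$ and $-1$ if $k < 0$. -/

import Mathlib

noncomputable section
open Finset

/-- The `q`-shifted factorial `(a;q)_k = (1-a)(1-qa)⋯(1-q^{k-1}a)`. -/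
def qPoch (q a : ℂ) (k : ℕ) : ℂ := ∏ i ∈ Finset.range k, (1 - q ^ i * a)

/-- The one-variable symmetric interpolation polynomial
`R_m(x) = (sx;q)_m (sx⁻¹;q)_m / ((q^m s²;q)_m (q^{-m};q)_m)`. -/
def Rone (q s : ℂ) (m : ℕ) (x : ℂ) : ℂ :=
  (qPoch q (s * x) m * qPoch q (s * x⁻¹) m) /
    (qPoch q (q ^ m * s ^ 2) m * qPoch q (q ^ (-(m : ℤ))) m)

/-- The one-variable nonsymmetric interpolation polynomial of degree `m ≥ 0`:
`G_m(x) = (qsx;q)_m (sx⁻¹;q)_m / ((q^{1+m} s²;q)_m (q^{-m};q)_m)`. -/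
def Gone (q s : ℂ) (m : ℕ) (x : ℂ) : ℂ :=
  (qPoch q (q * s * x) m * qPoch q (s * x⁻¹) m) /
    (qPoch q (q ^ (1 + m) * s ^ 2) m * qPoch q (q ^ (-(m : ℤ))) m)

/-- The one-variable nonsymmetric interpolation polynomial of degree `-m`, `m > 0`:
`G_{-m}(x) = q^m s x (qsx;q)_{m-1} (sx⁻¹;q)_{m+1} / ((q^m s²;q)_{m+1} (q^{1-m};q)_{m-1})`. -/
def GnegOne (q s : ℂ) (m : ℕ) (x : ℂ) : ℂ :=
  (q ^ m * s * x * qPoch q (q * s * x) (m - 1) * qPoch q (s * x⁻¹) (m + 1)) /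
    (qPoch q (q ^ m * s ^ 2) (m + 1) * qPoch q (q ^ (1 - (m : ℤ))) (m - 1))

/-- Evaluation of a one-variable Laurent polynomial. -/
def eval1 (c : ℤ →₀ ℂ) (x : ℂ) : ℂ := c.sum fun j a => a * x ^ j

/-!
For `x ≠ 0`, `G_{-m}(x)` is the value at `x` of the Laurent polynomial
`const · T · (qsT; q)_{m-1} · (sT⁻¹; q)_{m+1}`, whose exponents lie in
`[1 - (m + 1), 1 + (m - 1)] = [-m, m]`.

At `x = q^k s` with `0 ≤ k ≤ m` the factor `1 - q^k · s x⁻¹` of `(sx⁻¹; q)_{m+1}` vanishes; at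
`x = q^k s⁻¹` with `-m < k < 0` the factor `1 - q^{-k-1} · qsx` of `(qsx; q)_{m-1}` vanishes; at
`x = q^{-m} s⁻¹` the numerator turns into the denominator `(q^m s²; q)_{m+1} (q^{1-m}; q)_{m-1}`,
which is nonzero because `|q|, |s| < 1`.
-/

open scoped LaurentPolynomial
open LaurentPolynomial

namespace LaurentPolynomial

variable {R : Type*}

theorem support_coeff_mul_subset_Icc [Semiring R] {f g : R[T;T⁻¹]} {a b c d : ℤ}
    (hf : f.coeff.support ⊆ Icc a b) (hg : g.coeff.support ⊆ Icc c d) :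
    (f * g).coeff.support ⊆ Icc (a + c) (b + d) :=
  (AddMonoidAlgebra.support_coeff_mul_subset f g).trans <|
    (add_subset_add hf hg).trans (Icc_add_Icc_subset a b c d)

theorem support_coeff_C_mul_T_subset_Icc [Semiring R] (r : R) (n : ℤ) :
    (C r * T n).coeff.support ⊆ Icc n n := by
  simpa using support_C_mul_T r n

theorem support_coeff_prod_subset_Icc [CommSemiring R] {ι : Type*} {s : Finset ι}
    {f : ι → R[T;T⁻¹]} {a b : ι → ℤ} (h : ∀ i ∈ s, (f i).coeff.support ⊆ Icc (a i) (b i)) :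
    (∏ i ∈ s, f i).coeff.support ⊆ Icc (∑ i ∈ s, a i) (∑ i ∈ s, b i) := by
  classical
  induction s using Finset.induction_on with
  | empty => simpa using support_coeff_C_mul_T_subset_Icc (1 : R) 0
  | insert i s hi ih =>
    rw [prod_insert hi, sum_insert hi, sum_insert hi]
    exact support_coeff_mul_subset_Icc (h i (mem_insert_self i s))
      (ih fun j hj => h j (mem_insert_of_mem hj))

theorem support_coeff_one_sub_C_mul_T_subset_Icc [Ring R] (r : R) (n : ℤ) :
    (1 - C r * T n).coeff.support ⊆ Icc (min 0 n) (max 0 n) := by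
  classical
  intro j hj
  have h_one := support_coeff_C_mul_T_subset_Icc (1 : R) 0
  rw [map_one, T_zero, one_mul] at h_one
  rw [AddMonoidAlgebra.coeff_sub] at hj
  rcases mem_union.1 (Finsupp.support_sub hj) with h | h
  · exact Icc_subset_Icc (min_le_left 0 n) (le_max_left 0 n) (h_one h)
  · exact Icc_subset_Icc (min_le_right 0 n) (le_max_right 0 n)
      (support_coeff_C_mul_T_subset_Icc r n h)

end LaurentPolynomial

theorem eval1_coeff (f : ℂ[T;T⁻¹]) (x : ℂˣ) : eval1 f.coeff x = eval₂ (RingHom.id ℂ) x f := by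
  induction f using LaurentPolynomial.induction_on' with
  | add f g hf hg =>
    rw [map_add, ← hf, ← hg, AddMonoidAlgebra.coeff_add, eval1, eval1, eval1,
      Finsupp.sum_add_index' (fun _ => zero_mul _) (fun _ _ _ => add_mul _ _ _)]
  | C_mul_T n r =>
    rw [eval₂_C_mul_T, RingHom.id_apply, Units.val_zpow_eq_zpow_val, ← single_eq_C_mul_T, eval1,
      AddMonoidAlgebra.coeff_single, Finsupp.sum_single_index (zero_mul _)]

section qPoch

variable {q : ℂ}

theorem qPoch_eq_zero_of_pow_mul_eq_one {a : ℂ} {i k : ℕ} (hi : i < k) (h : q ^ i * a = 1) :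
    qPoch q a k = 0 :=
  prod_eq_zero (mem_range.2 hi) (sub_eq_zero.2 h.symm)

theorem qPoch_zpow_eq_zero (hq : q ≠ 0) {j : ℤ} {k : ℕ} (hj : j ≤ 0) (hjk : -j < k) :
    qPoch q (q ^ j) k = 0 := by
  refine qPoch_eq_zero_of_pow_mul_eq_one (i := j.natAbs) (by omega) ?_
  rw [← zpow_natCast, ← zpow_add₀ hq, show (j.natAbs : ℤ) + j = 0 by omega, zpow_zero]

theorem qPoch_ne_zero_of_norm_lt_one {a : ℂ} (hq : ‖q‖ ≤ 1) (ha : ‖a‖ < 1) (k : ℕ) :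
    qPoch q a k ≠ 0 := by
  refine prod_ne_zero_iff.2 fun i _ => sub_ne_zero.2 fun h => ?_
  have h_lt : ‖q ^ i * a‖ < 1 := by
    rw [norm_mul, norm_pow]
    exact (mul_le_of_le_one_left (norm_nonneg a) (pow_le_one₀ (norm_nonneg q) hq)).trans_lt ha
  rw [← h, norm_one] at h_lt
  exact h_lt.false

theorem qPoch_zpow_ne_zero (hq0 : 0 < ‖q‖) (hq1 : ‖q‖ < 1) {j : ℤ} {k : ℕ}
    (hjk : 0 < j ∨ j + k ≤ 0) : qPoch q (q ^ j) k ≠ 0 := by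
  refine prod_ne_zero_iff.2 fun i hi => sub_ne_zero.2 fun h_one => ?_
  have h_norm : ‖q‖ ^ ((i : ℤ) + j) = 1 := by
    rw [← norm_zpow, zpow_add₀ (norm_pos_iff.1 hq0), zpow_natCast, ← h_one, norm_one]
  have := (zpow_eq_one_iff_right₀ hq0.le hq1.ne).1 h_norm
  have := mem_range.1 hi
  omega

end qPoch

section qPochLaurent

variable {R : Type*} [CommRing R]

noncomputable def qPochLaurent (q a : R) (n : ℤ) (k : ℕ) : R[T;T⁻¹] :=
  ∏ i ∈ range k, (1 - C (q ^ i * a) * T n)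

theorem support_coeff_qPochLaurent_subset_Icc (q a : R) (n : ℤ) (k : ℕ) :
    (qPochLaurent q a n k).coeff.support ⊆ Icc (k * min 0 n) (k * max 0 n) := by
  simpa [qPochLaurent] using support_coeff_prod_subset_Icc (s := range k)
    fun i _ => support_coeff_one_sub_C_mul_T_subset_Icc (q ^ i * a) n

theorem eval₂_qPochLaurent (q a : ℂ) (n : ℤ) (k : ℕ) (x : ℂˣ) :
    eval₂ (RingHom.id ℂ) x (qPochLaurent q a n k) = qPoch q (a * (x : ℂ) ^ n) k := by
  simp only [qPochLaurent, qPoch, map_prod, map_sub, map_one, eval₂_C_mul_T, RingHom.id_apply,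
    Units.val_zpow_eq_zpow_val, mul_assoc]

end qPochLaurent

section GnegOne

noncomputable def GnegOneLaurent (q s : ℂ) (m : ℕ) : ℂ[T;T⁻¹] :=
  C (q ^ m * s / (qPoch q (q ^ m * s ^ 2) (m + 1) * qPoch q (q ^ (1 - (m : ℤ))) (m - 1))) * T 1 *
    qPochLaurent q (q * s) 1 (m - 1) * qPochLaurent q s (-1) (m + 1)

variable {q s : ℂ} {m : ℕ}

theorem eval₂_GnegOneLaurent (x : ℂˣ) :
    eval₂ (RingHom.id ℂ) x (GnegOneLaurent q s m) = GnegOne q s m x := by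
  simp only [GnegOneLaurent, GnegOne, map_mul, eval₂_C, eval₂_T, eval₂_qPochLaurent,
    RingHom.id_apply, zpow_one, zpow_neg_one]
  ring

theorem support_coeff_GnegOneLaurent_subset_Icc (hm : 0 < m) :
    (GnegOneLaurent q s m).coeff.support ⊆ Icc (-(m : ℤ)) m := by
  refine (support_coeff_mul_subset_Icc
    (support_coeff_mul_subset_Icc (support_coeff_C_mul_T_subset_Icc _ 1)
      (support_coeff_qPochLaurent_subset_Icc q (q * s) 1 (m - 1)))
    (support_coeff_qPochLaurent_subset_Icc q s (-1) (m + 1))).trans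
      (Icc_subset_Icc ?_ ?_) <;> simp
  omega

theorem GnegOne_zpow_mul_eq_zero (hq : q ≠ 0) (hs : s ≠ 0) {k : ℤ} (hk0 : 0 ≤ k)
    (hkm : k ≤ m) : GnegOne q s m (q ^ k * s) = 0 := by
  have h_arg : s * (q ^ k * s)⁻¹ = q ^ (-k) := by
    rw [zpow_neg]; field_simp
  rw [GnegOne, h_arg, qPoch_zpow_eq_zero hq (by omega) (by omega), mul_zero, zero_div]

theorem GnegOne_zpow_mul_inv_eq_zero (hq : q ≠ 0) (hs : s ≠ 0) {k : ℤ} (hmk : -(m : ℤ) < k)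
    (hk0 : k < 0) : GnegOne q s m (q ^ k * s⁻¹) = 0 := by
  have h_arg : q * s * (q ^ k * s⁻¹) = q ^ (1 + k) := by
    rw [zpow_add₀ hq, zpow_one]; field_simp
  rw [GnegOne, h_arg, qPoch_zpow_eq_zero hq (by omega) (by omega), mul_zero, zero_mul, zero_div]

theorem GnegOne_zpow_neg_mul_inv (hq0 : 0 < ‖q‖) (hq1 : ‖q‖ < 1) (hs : s ≠ 0)
    (hs1 : ‖s‖ < 1) : GnegOne q s m (q ^ (-(m : ℤ)) * s⁻¹) = 1 := by
  have hq := norm_pos_iff.1 hq0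
  have h_lead : q ^ m * s * (q ^ (-(m : ℤ)) * s⁻¹) = 1 := by
    rw [zpow_neg, zpow_natCast]; field_simp
  have h_left : q * s * (q ^ (-(m : ℤ)) * s⁻¹) = q ^ (1 - (m : ℤ)) := by
    rw [sub_eq_add_neg, zpow_add₀ hq, zpow_one]; field_simp
  have h_right : s * (q ^ (-(m : ℤ)) * s⁻¹)⁻¹ = q ^ m * s ^ 2 := by
    rw [zpow_neg, zpow_natCast]; field_simp
  have h_norm : ‖q ^ m * s ^ 2‖ < 1 := by
    rw [norm_mul, norm_pow, norm_pow]
    exact (mul_le_of_le_one_left (by positivity) (pow_le_one₀ hq0.le hq1.le)).trans_lt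
      (pow_lt_one₀ (norm_nonneg s) hs1 two_ne_zero)
  rw [GnegOne, h_lead, h_left, h_right, one_mul, mul_comm, div_self (mul_ne_zero
    (qPoch_ne_zero_of_norm_lt_one hq1.le h_norm _) (qPoch_zpow_ne_zero hq0 hq1 (by omega)))]

end GnegOne

/-- `G_{-m}` (`m > 0`) is a Laurent polynomial of degree `≤ m` and satisfies
`G_{-m}(q^k s^{sgn k}) = δ_{-m,k}` for all `k ∈ ℤ` with `|k| ≤ m`. -/
theorem stmt9 (q s : ℂ) (hq0 : 0 < ‖q‖) (hq1 : ‖q‖ < 1)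
    (hs0 : 0 < ‖s‖) (hs1 : ‖s‖ < 1) (m : ℕ) (hm : 0 < m) :
    (∃ c : ℤ →₀ ℂ, (∀ j ∈ c.support, j.natAbs ≤ m) ∧
      ∀ x : ℂ, x ≠ 0 → eval1 c x = GnegOne q s m x) ∧
    ∀ k : ℤ, k.natAbs ≤ m →
      GnegOne q s m (q ^ k * (if 0 ≤ k then s else s⁻¹)) = if k = -(m : ℤ) then 1 else 0 := by
  have hq := norm_pos_iff.1 hq0
  have hs := norm_pos_iff.1 hs0
  refine ⟨⟨(GnegOneLaurent q s m).coeff, fun j hj => ?_, fun x hx => ?_⟩, fun k hk => ?_⟩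
  · have := mem_Icc.1 (support_coeff_GnegOneLaurent_subset_Icc hm hj)
    omega
  · simpa [eval₂_GnegOneLaurent] using eval1_coeff (GnegOneLaurent q s m) (Units.mk0 x hx)
  · rcases lt_or_ge k 0 with hk0 | hk0
    · rw [if_neg hk0.not_ge]
      rcases eq_or_ne k (-(m : ℤ)) with rfl | hkm
      · rw [if_pos rfl, GnegOne_zpow_neg_mul_inv hq0 hq1 hs hs1]
      · rw [if_neg hkm, GnegOne_zpow_mul_inv_eq_zero hq hs (by omega) hk0]
    · rw [if_pos hk0, if_neg (by omega), GnegOne_zpow_mul_eq_zero hq hs hk0 (by omega)]
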